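/- If b_0(θ) > 0 for every θ ∈ Θ, then almost surely the limit lim_{t→∞} b_t(θ*) exists and is strictly positive. -/

import Mathlib

/-!
Dividing through by the posterior of `θstar`,
`(b_t θstar)⁻¹ = ∑ θ, b0 θ / b0 θstar * ∏_{k ≤ t} l(s_k | θ, q_k) / l(s_k | θstar, q_k)`.
Under the true law each likelihood ratio has mean at most one, and the ratios are independent,
so the right-hand side is a nonnegative supermartingale and converges almost surely. Its `θstar`
term is `1`, so the limit is at least `1` and `b_t θstar` converges to its positive reciprocal.
Almost surely every observed `s_k` has positive likelihood under `θstar`, so the ratios are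
genuine quotients.
-/

open MeasureTheory Filter ProbabilityTheory Finset

section Bayes

variable {Θ : Type*}

def unnormalizedPosterior (b0 : Θ → ℝ) (L : ℕ → Θ → ℝ) (t : ℕ) (θ : Θ) : ℝ :=
  b0 θ * ∏ k ∈ range t, L k θ

lemma unnormalizedPosterior_succ (b0 : Θ → ℝ) (L : ℕ → Θ → ℝ) (t : ℕ) (θ : Θ) :
    unnormalizedPosterior b0 L (t + 1) θ = L t θ * unnormalizedPosterior b0 L t θ := by
  simp only [unnormalizedPosterior, prod_range_succ]
  ring

variable [Fintype Θ]

lemma bayes_eq_unnormalizedPosterior_div {b0 : Θ → ℝ} {L : ℕ → Θ → ℝ} {b : ℕ → Θ → ℝ}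
    (hb0_sum : ∑ θ, b0 θ = 1) (hb_init : ∀ θ, b 0 θ = b0 θ)
    (hb_upd : ∀ t θ, b (t + 1) θ = L t θ * b t θ / ∑ θ', L t θ' * b t θ')
    (hD : ∀ t, ∑ θ, unnormalizedPosterior b0 L t θ ≠ 0) (t : ℕ) (θ : Θ) :
    b t θ = unnormalizedPosterior b0 L t θ / ∑ θ', unnormalizedPosterior b0 L t θ' := by
  induction t generalizing θ with
  | zero => simp [unnormalizedPosterior, hb_init, hb0_sum]
  | succ t ih =>
    have hnorm : ∑ θ', L t θ' * b t θ' =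
        (∑ θ', unnormalizedPosterior b0 L (t + 1) θ') /
          ∑ θ', unnormalizedPosterior b0 L t θ' := by
      simp only [ih, unnormalizedPosterior_succ, sum_div, mul_div_assoc]
    rw [hb_upd, hnorm, ih, unnormalizedPosterior_succ]
    field_simp [hD t]

lemma inv_bayes_eq_sum_likelihoodRatio {b0 : Θ → ℝ} {L : ℕ → Θ → ℝ} {b : ℕ → Θ → ℝ} {θstar : Θ}
    (hb0_sum : ∑ θ, b0 θ = 1) (hb_init : ∀ θ, b 0 θ = b0 θ)
    (hb_upd : ∀ t θ, b (t + 1) θ = L t θ * b t θ / ∑ θ', L t θ' * b t θ')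
    (hb0_nonneg : ∀ θ, 0 ≤ b0 θ) (hL_nonneg : ∀ k θ, 0 ≤ L k θ)
    (hb0_star : 0 < b0 θstar) (hL_star : ∀ k, 0 < L k θstar) (t : ℕ) :
    (b t θstar)⁻¹ = ∑ θ, b0 θ / b0 θstar * ∏ k ∈ range t, L k θ / L k θstar := by
  have hU_nonneg : ∀ t θ, 0 ≤ unnormalizedPosterior b0 L t θ := fun t θ =>
    mul_nonneg (hb0_nonneg θ) (prod_nonneg fun k _ => hL_nonneg k θ)
  have hU_star : ∀ t, 0 < unnormalizedPosterior b0 L t θstar := fun t =>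
    mul_pos hb0_star (prod_pos fun k _ => hL_star k)
  have hD : ∀ t, ∑ θ, unnormalizedPosterior b0 L t θ ≠ 0 := fun t =>
    (sum_pos' (fun θ _ => hU_nonneg t θ) ⟨θstar, mem_univ _, hU_star t⟩).ne'
  rw [bayes_eq_unnormalizedPosterior_div hb0_sum hb_init hb_upd hD, inv_div, sum_div]
  refine sum_congr rfl fun θ _ => ?_
  rw [unnormalizedPosterior, unnormalizedPosterior, prod_div_distrib, div_mul_div_comm]

lemma one_le_sum_likelihoodRatio {b0 : Θ → ℝ} {L : ℕ → Θ → ℝ} {θstar : Θ}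
    (hb0_nonneg : ∀ θ, 0 ≤ b0 θ) (hL_nonneg : ∀ k θ, 0 ≤ L k θ)
    (hb0_star : 0 < b0 θstar) (hL_star : ∀ k, 0 < L k θstar) (t : ℕ) :
    1 ≤ ∑ θ, b0 θ / b0 θstar * ∏ k ∈ range t, L k θ / L k θstar := by
  have hstar : b0 θstar / b0 θstar * ∏ k ∈ range t, L k θstar / L k θstar = 1 := by
    simp [hb0_star.ne', fun k => (hL_star k).ne']
  rw [← hstar]
  exact single_le_sum (f := fun θ => b0 θ / b0 θstar * ∏ k ∈ range t, L k θ / L k θstar)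
    (fun θ _ => mul_nonneg (div_nonneg (hb0_nonneg θ) hb0_star.le)
      (prod_nonneg fun k _ => div_nonneg (hL_nonneg k θ) (hL_star k).le)) (mem_univ θstar)

end Bayes

theorem MeasureTheory.Supermartingale.exists_ae_tendsto_of_nonneg {Ω : Type*}
    {mΩ : MeasurableSpace Ω} {P : Measure Ω} [IsFiniteMeasure P] {ℱ : Filtration ℕ mΩ}
    {f : ℕ → Ω → ℝ}
    (hf : Supermartingale f ℱ P) (hf_nonneg : ∀ n, 0 ≤ᵐ[P] f n) :
    ∀ᵐ ω ∂P, ∃ c, Tendsto (fun n => f n ω) atTop (nhds c) := by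
  have hbdd : ∀ n, eLpNorm ((-f) n) 1 P ≤ ENNReal.ofReal (∫ ω, f 0 ω ∂P) := fun n => by
    rw [Pi.neg_apply, eLpNorm_neg, eLpNorm_one_eq_lintegral_enorm,
      lintegral_congr_ae ((hf_nonneg n).mono fun ω hω => Real.enorm_eq_ofReal hω),
      ← ofReal_integral_eq_lintegral_ofReal (hf.integrable n) (hf_nonneg n)]
    exact ENNReal.ofReal_le_ofReal (by
      simpa using hf.setIntegral_le (Nat.zero_le n) MeasurableSet.univ)
  filter_upwards [hf.neg.exists_ae_tendsto_of_bdd hbdd] with ω ⟨c, hc⟩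
  exact ⟨-c, by simpa using hc.neg⟩

theorem MeasureTheory.Supermartingale.finset_sum {Ω ι : Type*} {mΩ : MeasurableSpace Ω}
    {P : Measure Ω} {ℱ : Filtration ℕ mΩ} (s : Finset ι) {f : ι → ℕ → Ω → ℝ}
    (hf : ∀ i ∈ s, Supermartingale (f i) ℱ P) : Supermartingale (∑ i ∈ s, f i) ℱ P :=
  Finset.sum_induction _ (Supermartingale · ℱ P) (fun _ _ => Supermartingale.add)
    (martingale_zero ℝ ℱ P).supermartingale hf

lemma sum_mul_div_self_le {α : Type*} (s : Finset α) {f p : α → ℝ} (hf : ∀ x ∈ s, 0 ≤ f x) :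
    ∑ x ∈ s, p x * (f x / p x) ≤ ∑ x ∈ s, f x := by
  refine sum_le_sum fun x hx => ?_
  rcases eq_or_ne (p x) 0 with hp | hp
  · simpa [hp] using hf x hx
  · rw [mul_div_cancel₀ _ hp]

section FiniteLaw

variable {Ω S : Type*} {mΩ : MeasurableSpace Ω} [MeasurableSpace S] [MeasurableSingletonClass S]
  {P : Measure Ω} {Z : Ω → S} {p : S → ℝ}

lemma integral_comp_eq_sum_of_law [Fintype S] [IsFiniteMeasure P] (hZ : Measurable Z)
    (hp : ∀ x, 0 ≤ p x) (hlaw : ∀ x, P {ω | Z ω = x} = ENNReal.ofReal (p x)) (g : S → ℝ) :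
    ∫ ω, g (Z ω) ∂P = ∑ x, p x * g x := by
  rw [← integral_map hZ.aemeasurable (measurable_of_finite g).aestronglyMeasurable,
    integral_fintype Integrable.of_finite]
  refine sum_congr rfl fun x _ => ?_
  rw [smul_eq_mul, measureReal_def, Measure.map_apply hZ (measurableSet_singleton x)]
  simp only [Set.preimage, Set.mem_singleton_iff]
  rw [hlaw, ENNReal.toReal_ofReal (hp x)]

lemma ae_pos_of_law [Countable S] (hZ : Measurable Z)
    (hlaw : ∀ x, P {ω | Z ω = x} = ENNReal.ofReal (p x)) : ∀ᵐ ω ∂P, 0 < p (Z ω) := by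
  refine ae_of_ae_map (p := fun x => 0 < p x) hZ.aemeasurable
    (ae_iff_of_countable.2 fun x hx => ?_)
  rw [Measure.map_apply hZ (measurableSet_singleton x)] at hx
  exact ENNReal.ofReal_pos.1 (pos_iff_ne_zero.2 (hlaw x ▸ hx))

end FiniteLaw

section LikelihoodRatio

variable {Ω S : Type*} {mΩ : MeasurableSpace Ω} [mS : MeasurableSpace S] {P : Measure Ω}

def observationFiltration (Y : ℕ → Ω → S) (hY : ∀ k, Measurable (Y k)) : Filtration ℕ mΩ where
  seq t := ⨆ k < t, mS.comap (Y k)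
  mono' _ _ hst := biSup_mono fun _ hk => hk.trans_le hst
  le' _ := iSup₂_le fun k _ => (hY k).comap_le

variable {Y : ℕ → Ω → S} {hY : ∀ k, Measurable (Y k)}

lemma comap_le_observationFiltration {k t : ℕ} (hkt : k < t) :
    mS.comap (Y k) ≤ observationFiltration Y hY t :=
  le_iSup₂ (f := fun k (_ : k < t) => mS.comap (Y k)) k hkt

lemma indep_comap_observationFiltration (hind : iIndepFun Y P) (t : ℕ) :
    Indep (mS.comap (Y t)) (observationFiltration Y hY t) P := by
  have hdisj : Disjoint ({t} : Set ℕ) {k | k < t} := by simp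
  have h := indep_iSup_of_disjoint (fun k => (hY k).comap_le)
    ((iIndepFun_iff_iIndep _ _ _).1 hind) hdisj
  rwa [_root_.iSup_singleton] at h

theorem supermartingale_prod_of_iIndepFun [IsProbabilityMeasure P] (hind : iIndepFun Y P)
    {g : ℕ → S → ℝ} (hg_meas : ∀ k, Measurable (g k))
    (hg_int : ∀ k, Integrable (fun ω => g k (Y k ω)) P) (hg_nonneg : ∀ k x, 0 ≤ g k x)
    (hg_mean : ∀ k, ∫ ω, g k (Y k ω) ∂P ≤ 1) :
    Supermartingale (fun t ω => ∏ k ∈ range t, g k (Y k ω)) (observationFiltration Y hY) P := by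
  set M : ℕ → Ω → ℝ := fun t ω => ∏ k ∈ range t, g k (Y k ω)
  have hfactor_meas : ∀ k, Measurable[mS.comap (Y k)] fun ω => g k (Y k ω) :=
    fun k => (hg_meas k).comp (Measurable.of_comap_le le_rfl)
  have hM_meas : ∀ t, Measurable[observationFiltration Y hY t] (M t) := fun t =>
    Finset.measurable_prod _ fun k hk =>
      (hfactor_meas k).mono (comap_le_observationFiltration (mem_range.1 hk)) le_rfl
  have hM_succ : ∀ t, M (t + 1) = M t * fun ω => g t (Y t ω) := fun t => by
    ext ω; simp only [M, prod_range_succ, Pi.mul_apply]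
  have hindep : ∀ t, IndepFun (M t) (fun ω => g t (Y t ω)) P := fun t =>
    indep_of_indep_of_le_right (indep_of_indep_of_le_left
      (indep_comap_observationFiltration hind t).symm (hM_meas t).comap_le)
      (hfactor_meas t).comap_le
  have hM_int : ∀ t, Integrable (M t) P := by
    intro t
    induction t with
    | zero => simp [M]
    | succ t ih => rw [hM_succ]; exact (hindep t).integrable_mul ih (hg_int t)
  refine supermartingale_nat (fun t => (hM_meas t).stronglyMeasurable) hM_int fun t => ?_
  have hpull := condExp_mul_of_stronglyMeasurable_left (hM_meas t).stronglyMeasurable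
    (hM_succ t ▸ hM_int (t + 1)) (hg_int t)
  have hmean := condExp_indep_eq ((hY t).comap_le) ((observationFiltration Y hY).le t)
    (hfactor_meas t).stronglyMeasurable (indep_comap_observationFiltration hind t)
  filter_upwards [hpull, hmean] with ω hpull hmean
  rw [hM_succ, hpull, Pi.mul_apply, hmean]
  exact mul_le_of_le_one_right (prod_nonneg fun k _ => hg_nonneg k _) (hg_mean t)

end LikelihoodRatio

theorem local_belief_true_limit_pos_general
    {Θ : Type*} [Fintype Θ] (θstar : Θ)
    {Q : Type*}
    {S : Type*} [Fintype S] [MeasurableSpace S] [MeasurableSingletonClass S]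
    (l : Θ → Q → S → ℝ)
    (hl_nonneg : ∀ θ q s, 0 ≤ l θ q s)
    (hl_sum : ∀ θ q, ∑ s, l θ q s = 1)
    (q : ℕ → Q)
    {Ω : Type*} [MeasurableSpace Ω] (P : Measure Ω) [IsProbabilityMeasure P]
    (s : ℕ → Ω → S)
    (hs_meas : ∀ t, 1 ≤ t → Measurable (s t))
    (hs_law : ∀ t, 1 ≤ t → ∀ x, P {ω | s t ω = x} = ENNReal.ofReal (l θstar (q t) x))
    (hs_indep : ProbabilityTheory.iIndepFun
      (fun t : {t : ℕ // 1 ≤ t} => s t.1) P)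
    (b : ℕ → Θ → Ω → ℝ)
    (b0 : Θ → ℝ)
    (hb0_sum : ∑ θ, b0 θ = 1)
    (hb_init : ∀ θ ω, b 0 θ ω = b0 θ)
    (hb_upd : ∀ t θ ω, b (t + 1) θ ω =
      l θ (q (t + 1)) (s (t + 1) ω) * b t θ ω /
        ∑ θ', l θ' (q (t + 1)) (s (t + 1) ω) * b t θ' ω)
    (hb0_pos : ∀ θ, 0 < b0 θ) :
    ∀ᵐ ω ∂P, ∃ c : ℝ, 0 < c ∧ Tendsto (fun t => b t θstar ω) atTop (nhds c) := by
  set Y : ℕ → Ω → S := fun k => s (k + 1)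
  have hY_meas : ∀ k, Measurable (Y k) := fun k => hs_meas _ k.succ_pos
  have hY_law : ∀ k x, P {ω | Y k ω = x} = ENNReal.ofReal (l θstar (q (k + 1)) x) :=
    fun k => hs_law _ k.succ_pos
  have hY_indep : iIndepFun Y P :=
    hs_indep.precomp (g := fun k => ⟨k + 1, k.succ_pos⟩) fun _ _ h => by simpa using h
  set ratio : Θ → ℕ → S → ℝ := fun θ k x => l θ (q (k + 1)) x / l θstar (q (k + 1)) x
  have hratio_nonneg : ∀ θ k x, 0 ≤ ratio θ k x := fun θ k x =>
    div_nonneg (hl_nonneg _ _ _) (hl_nonneg _ _ _)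
  have hratio_mean : ∀ θ k, ∫ ω, ratio θ k (Y k ω) ∂P ≤ 1 := fun θ k => by
    rw [integral_comp_eq_sum_of_law (hY_meas k) (hl_nonneg _ _) (hY_law k),
      ← hl_sum θ (q (k + 1))]
    exact sum_mul_div_self_le _ fun x _ => hl_nonneg _ _ _
  set X : ℕ → Ω → ℝ := fun t ω => ∑ θ, b0 θ / b0 θstar * ∏ k ∈ range t, ratio θ k (Y k ω)
  have hX : Supermartingale X (observationFiltration Y hY_meas) P := by
    convert Supermartingale.finset_sum univ fun θ _ =>
      (supermartingale_prod_of_iIndepFun hY_indep (fun k => measurable_of_finite _)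
        (fun k => Integrable.of_finite.comp_measurable (hY_meas k)) (hratio_nonneg θ)
        (hratio_mean θ)).smul_nonneg (div_nonneg (hb0_pos θ).le (hb0_pos θstar).le) using 2
    ext t ω
    simp [X, Finset.sum_apply]
  have hX_nonneg : ∀ t, 0 ≤ᵐ[P] X t := fun t => ae_of_all _ fun ω =>
    sum_nonneg fun θ _ => mul_nonneg (div_nonneg (hb0_pos θ).le (hb0_pos θstar).le)
      (prod_nonneg fun k _ => hratio_nonneg θ k _)
  have hlik_pos : ∀ᵐ ω ∂P, ∀ k, 0 < l θstar (q (k + 1)) (Y k ω) :=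
    ae_all_iff.2 fun k => ae_pos_of_law (hY_meas k) (hY_law k)
  filter_upwards [hX.exists_ae_tendsto_of_nonneg hX_nonneg, hlik_pos] with ω ⟨c, hc⟩ hω
  have hb_inv : ∀ t, (b t θstar ω)⁻¹ = X t ω :=
    inv_bayes_eq_sum_likelihoodRatio (b := fun t θ => b t θ ω) hb0_sum (hb_init · ω)
      (fun t θ => hb_upd t θ ω) (fun θ => (hb0_pos θ).le) (fun _ _ => hl_nonneg _ _ _)
      (hb0_pos θstar) hω
  have hc_one : 1 ≤ c := ge_of_tendsto' hc fun t =>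
    one_le_sum_likelihoodRatio (L := fun k θ => l θ (q (k + 1)) (Y k ω))
      (fun θ => (hb0_pos θ).le) (fun _ _ => hl_nonneg _ _ _) (hb0_pos θstar) hω t
  refine ⟨c⁻¹, by positivity, (hc.inv₀ (by positivity)).congr fun t => ?_⟩
  rw [← hb_inv, inv_inv]

/-- **The local belief on the true hypothesis converges to a strictly positive limit.**
`Θ` is a finite nonempty set of hypotheses with true hypothesis `θ* ∈ Θ`; `Q` a finite set of
states; `S` a finite set of observations; `l` a likelihood function (nonnegative, summing to one
over `S` for every `θ, q`); `(q_t)` a fixed deterministic state path; the observations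
`(s_t)_{t ≥ 1}` are mutually independent with `s_t` distributed according to `l(·|θ*,q_t)`; the
local beliefs evolve from a probability vector `b_0` by the Bayesian update. If `b_0(θ) > 0` for
every `θ ∈ Θ`, then almost surely the limit `lim_{t→∞} b_t(θ*)` exists and is strictly
positive. -/
theorem local_belief_true_limit_pos
    {Θ : Type*} [Fintype Θ] [Nonempty Θ] (θstar : Θ)
    {Q : Type*} [Fintype Q]
    {S : Type*} [Fintype S] [Nonempty S] [MeasurableSpace S] [MeasurableSingletonClass S]
    (l : Θ → Q → S → ℝ)
    (hl_nonneg : ∀ θ q s, 0 ≤ l θ q s)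
    (hl_sum : ∀ θ q, ∑ s, l θ q s = 1)
    (q : ℕ → Q)
    {Ω : Type*} [MeasurableSpace Ω] (P : Measure Ω) [IsProbabilityMeasure P]
    (s : ℕ → Ω → S)
    (hs_meas : ∀ t, 1 ≤ t → Measurable (s t))
    (hs_law : ∀ t, 1 ≤ t → ∀ x, P {ω | s t ω = x} = ENNReal.ofReal (l θstar (q t) x))
    (hs_indep : ProbabilityTheory.iIndepFun
      (fun t : {t : ℕ // 1 ≤ t} => s t.1) P)
    (b : ℕ → Θ → Ω → ℝ)
    (b0 : Θ → ℝ)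
    (hb0_sum : ∑ θ, b0 θ = 1)
    (hb_init : ∀ θ ω, b 0 θ ω = b0 θ)
    (hb_upd : ∀ t θ ω, b (t + 1) θ ω =
      l θ (q (t + 1)) (s (t + 1) ω) * b t θ ω /
        ∑ θ', l θ' (q (t + 1)) (s (t + 1) ω) * b t θ' ω)
    (hb0_pos : ∀ θ, 0 < b0 θ) :
    ∀ᵐ ω ∂P, ∃ c : ℝ, 0 < c ∧ Tendsto (fun t => b t θstar ω) atTop (nhds c) :=
  local_belief_true_limit_pos_general θstar l hl_nonneg hl_sum q P s hs_meas hs_law hs_indep b b0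
    hb0_sum hb_init hb_upd hb0_pos
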